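/- Let f : 𝕊ⁿ → ℝ be L₀-Lipschitz with respect to the Frobenius norm and let μ > 0. For X ∈ 𝕊ⁿ and U ∈ 𝕊ⁿ define the zeroth-order random oracle O_μ(X,U) := ((f(X + μU) − f(X))/μ) · U. Then for every X ∈ 𝕊ⁿ, E_{U∼𝔾ⁿ}[ ‖O_μ(X,U)‖_F² ] ≤ (1/4) · L₀² · (n⁴ + 2n³ + 5n² + 4n). -/

import Mathlib

open MeasureTheory ProbabilityTheory Matrix

noncomputable section

instance matrixMeasurableSpace (n : ℕ) : MeasurableSpace (Matrix (Fin n) (Fin n) ℝ) :=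
  inferInstanceAs (MeasurableSpace (Fin n → Fin n → ℝ))

/-- Auxiliary product of independent Gaussians: variance `1` at diagonal positions,
variance `1/2` at off-diagonal positions. -/
def gaussAux (n : ℕ) : Measure (Fin n → Fin n → ℝ) :=
  Measure.pi fun i => Measure.pi fun j => gaussianReal 0 (if i = j then 1 else 2⁻¹)

/-- The Gaussian orthogonal ensemble `𝔾ⁿ`: the law of the random symmetric matrix whose
entry `(i,j)` with `i ≤ j` is the independent Gaussian `g i j` (so `U_ii ~ N(0,1)`,
`U_ij = U_ji ~ N(0,1/2)` for `i < j`). -/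
def goe (n : ℕ) : Measure (Matrix (Fin n) (Fin n) ℝ) :=
  (gaussAux n).map fun g => Matrix.of fun i j => if i ≤ j then g i j else g j i

/-- The Frobenius norm `‖M‖_F = sqrt (trace (Mᵀ * M))`. -/
def frob {n : ℕ} (M : Matrix (Fin n) (Fin n) ℝ) : ℝ :=
  Real.sqrt (Matrix.trace (Mᵀ * M))

/-! Since `f` is `L₀`-Lipschitz on symmetric matrices, `‖O_μ(X,U)‖_F ≤ L₀ ‖U‖_F²` for every
symmetric `U`, so it suffices to compute `E ‖U‖_F⁴` under the GOE. In terms of the independent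
upper-triangular entries, `‖U‖_F² = ∑_{i ≤ j} U_ij² / Var U_ij` is a sum of `N = n(n+1)/2`
independent squares of standard Gaussians, i.e. a `χ²` variable with `N` degrees of freedom, whose
second moment is `N² + 2N = (n⁴ + 2n³ + 5n² + 4n) / 4`; the Gaussian moments
`E x^(2k) = (2k-1)‼ vᵏ` behind this come from the Gamma integral. -/

open Real Set Finset
open scoped NNReal

-- For `k = 0` the truncated subtraction gives `0‼ = 1`, the usual value of `(-1)‼`.
open scoped Nat in
theorem integral_pow_mul_exp_neg_mul_sq {b : ℝ} (hb : 0 < b) (k : ℕ) :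
    ∫ x : ℝ, x ^ (2 * k) * exp (-b * x ^ 2) = (2 * k - 1 : ℕ)‼ * √(π / b) / (2 * b) ^ k := by
  have heven : ∫ x : ℝ, x ^ (2 * k) * exp (-b * x ^ 2)
      = 2 * ∫ x in Ioi (0 : ℝ), x ^ (2 * k) * exp (-b * x ^ 2) := by
    rw [← integral_comp_abs (f := fun y => y ^ (2 * k) * exp (-b * y ^ 2))]
    simp only [pow_mul, sq_abs]
  have half_line : ∫ x in Ioi (0 : ℝ), x ^ (2 * k) * exp (-b * x ^ 2)
      = b ^ (-((2 * k : ℕ) + 1 : ℝ) / 2) * (1 / 2) * Gamma (k + 1 / 2) := by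
    rw [show ((k : ℝ) + 1 / 2) = (((2 * k : ℕ) : ℝ) + 1) / 2 by push_cast; ring,
      ← integral_rpow_mul_exp_neg_mul_rpow two_pos (neg_one_lt_zero.trans_le (Nat.cast_nonneg _))
        hb]
    refine setIntegral_congr_fun measurableSet_Ioi fun x _ => ?_
    simp only [rpow_natCast, rpow_two]
  have hpow : b ^ (-((2 * k : ℕ) + 1 : ℝ) / 2) = (b ^ k)⁻¹ * (√b)⁻¹ := by
    rw [sqrt_eq_rpow, ← rpow_natCast, ← rpow_neg hb.le, ← rpow_neg hb.le, ← rpow_add hb]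
    push_cast
    ring_nf
  have hsqrt : √b ≠ 0 := (sqrt_pos.2 hb).ne'
  rw [heven, half_line, hpow, Gamma_nat_add_half, sqrt_div' _ hb.le, mul_pow]
  field_simp

open scoped Nat in
theorem integral_pow_two_mul_gaussianReal (v : ℝ≥0) (k : ℕ) :
    ∫ x, x ^ (2 * k) ∂gaussianReal 0 v = (2 * k - 1 : ℕ)‼ * (v : ℝ) ^ k := by
  rcases eq_or_ne v 0 with rfl | hv
  · rcases k with _ | k <;> simp [gaussianReal_zero_var]
  have hv_pos : (0 : ℝ) < v := by positivity
  have hpdf (x : ℝ) : gaussianPDFReal 0 v x • x ^ (2 * k)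
      = (√(2 * π * v))⁻¹ * (x ^ (2 * k) * exp (-(2 * (v : ℝ))⁻¹ * x ^ 2)) := by
    simp only [gaussianPDFReal_def, smul_eq_mul]
    rw [show -(x - 0) ^ 2 / (2 * (v : ℝ)) = -(2 * (v : ℝ))⁻¹ * x ^ 2 by ring]
    ring
  rw [integral_gaussianReal_eq_integral_smul hv]
  simp_rw [hpdf]
  rw [integral_const_mul, integral_pow_mul_exp_neg_mul_sq (by positivity),
    div_inv_eq_mul, show 2 * (2 * (v : ℝ))⁻¹ = (v : ℝ)⁻¹ by field_simp]
  have hsqrt : √(π * (2 * v)) ≠ 0 := by positivity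
  field_simp
  simp [hv_pos.ne']

theorem integral_sq_gaussianReal (v : ℝ≥0) : ∫ x, x ^ 2 ∂gaussianReal 0 v = v := by
  simpa using integral_pow_two_mul_gaussianReal v 1

theorem integral_pow_four_gaussianReal (v : ℝ≥0) :
    ∫ x, x ^ 4 ∂gaussianReal 0 v = 3 * (v : ℝ) ^ 2 := by
  simpa [Nat.doubleFactorial] using integral_pow_two_mul_gaussianReal v 2

theorem integrable_pow_gaussianReal (v : ℝ≥0) (k : ℕ) :
    Integrable (fun x => x ^ k) (gaussianReal 0 v) := by
  refine (integrable_norm_iff (by fun_prop)).1 ?_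
  simpa only [norm_pow, id] using
    (memLp_id_gaussianReal (μ := 0) (v := v) k).integrable_norm_pow' (p := k)

theorem memLp_inv_mul_sq_gaussianReal (v : ℝ≥0) :
    MemLp (fun x => (v : ℝ)⁻¹ * x ^ 2) 2 (gaussianReal 0 v) :=
  (memLp_two_iff_integrable_sq (by fun_prop)).2 <| by
    simpa only [mul_pow, ← pow_mul] using
      (integrable_pow_gaussianReal v 4).const_mul ((v : ℝ)⁻¹ ^ 2)

theorem integral_inv_mul_sq_gaussianReal {v : ℝ≥0} (hv : v ≠ 0) :
    ∫ x, (v : ℝ)⁻¹ * x ^ 2 ∂gaussianReal 0 v = 1 := by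
  rw [integral_const_mul, integral_sq_gaussianReal, inv_mul_cancel₀ (by exact_mod_cast hv)]

theorem variance_inv_mul_sq_gaussianReal {v : ℝ≥0} (hv : v ≠ 0) :
    variance (fun x => (v : ℝ)⁻¹ * x ^ 2) (gaussianReal 0 v) = 2 := by
  rw [variance_eq_sub (memLp_inv_mul_sq_gaussianReal v)]
  simp only [Pi.pow_apply, mul_pow, ← pow_mul, integral_const_mul, integral_sq_gaussianReal]
  rw [integral_pow_four_gaussianReal]
  field_simp
  norm_num

section ProductOfProducts

variable {ι κ : Type*} [Fintype ι] [Fintype κ] (μ : ι → κ → Measure ℝ)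
  [∀ i j, IsProbabilityMeasure (μ i j)]

theorem iIndepFun_eval_eval_pi :
    iIndepFun (fun (p : ι × κ) (ω : ι → κ → ℝ) => ω p.1 p.2)
      (Measure.pi fun i => Measure.pi (μ i)) := by
  simpa only [Measure.infinitePi_eq_pi, id] using
    iIndepFun_uncurry_infinitePi' μ (X := fun _ _ => id) fun _ _ => measurable_id

theorem measurePreserving_eval_eval_pi (i : ι) (j : κ) :
    MeasurePreserving (fun ω : ι → κ → ℝ => ω i j)
      (Measure.pi fun i => Measure.pi (μ i)) (μ i j) :=
  (measurePreserving_eval (μ i) j).comp (measurePreserving_eval _ i)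

end ProductOfProducts

theorem integral_sq_sum_eq_of_indepFun {Ω ι : Type*} [MeasurableSpace Ω] {P : Measure Ω}
    [IsProbabilityMeasure P] {X : ι → Ω → ℝ} {s : Finset ι} (hX : ∀ i ∈ s, MemLp (X i) 2 P)
    (hind : Set.Pairwise ↑s fun i j => IndepFun (X i) (X j) P) :
    ∫ ω, (∑ i ∈ s, X i ω) ^ 2 ∂P
      = (∑ i ∈ s, ∫ ω, X i ω ∂P) ^ 2 + ∑ i ∈ s, variance (X i) P := by
  rw [← IndepFun.variance_sum hX hind, variance_eq_sub (memLp_finsetSum' s hX),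
    ← integral_finsetSum s fun i hi => (hX i hi).integrable one_le_two]
  simp [Finset.sum_apply]

section Frobenius

variable {n : ℕ}

theorem frob_sq (M : Matrix (Fin n) (Fin n) ℝ) : frob M ^ 2 = ∑ i, ∑ j, M i j ^ 2 := by
  have htrace : (Mᵀ * M).trace = ∑ i, ∑ j, M i j ^ 2 := by
    simp only [Matrix.trace, Matrix.diag, Matrix.mul_apply, Matrix.transpose_apply, ← sq]
    exact sum_comm
  rw [frob, htrace, Real.sq_sqrt (by positivity)]

theorem frob_nonneg (M : Matrix (Fin n) (Fin n) ℝ) : 0 ≤ frob M := Real.sqrt_nonneg _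

theorem frob_eq_sqrt_sum (M : Matrix (Fin n) (Fin n) ℝ) :
    frob M = √(∑ i, ∑ j, M i j ^ 2) := by
  rw [← frob_sq, Real.sqrt_sq (frob_nonneg M)]

theorem measurable_frob : Measurable (frob : Matrix (Fin n) (Fin n) ℝ → ℝ) := by
  simp only [funext frob_eq_sqrt_sum]
  fun_prop

theorem frob_smul (c : ℝ) (M : Matrix (Fin n) (Fin n) ℝ) : frob (c • M) = |c| * frob M := by
  simp only [frob_eq_sqrt_sum, Matrix.smul_apply, smul_eq_mul, mul_pow, ← mul_sum]
  rw [Real.sqrt_mul (sq_nonneg c), Real.sqrt_sq_eq_abs]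

theorem frob_oracle_le {f : Matrix (Fin n) (Fin n) ℝ → ℝ} {L₀ : ℝ}
    (hlip : ∀ X Y : Matrix (Fin n) (Fin n) ℝ, X.IsSymm → Y.IsSymm →
      |f X - f Y| ≤ L₀ * frob (X - Y))
    (μ : ℝ) {X U : Matrix (Fin n) (Fin n) ℝ} (hX : X.IsSymm) (hU : U.IsSymm) :
    frob (((f (X + μ • U) - f X) / μ) • U) ≤ L₀ * frob U ^ 2 := by
  have hdiff : |f (X + μ • U) - f X| ≤ L₀ * frob U * |μ| := by
    have := hlip _ _ (hX.add (hU.smul μ)) hX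
    rw [add_sub_cancel_left, frob_smul] at this
    linarith
  -- needed for `μ = 0`, where the quotient is `0 / 0 = 0`
  have hbound_nonneg : 0 ≤ L₀ * frob U := by
    simpa using (abs_nonneg _).trans (hlip U 0 hU Matrix.isSymm_zero)
  have hquot : |(f (X + μ • U) - f X) / μ| ≤ L₀ * frob U := by
    rw [abs_div]
    exact div_le_of_le_mul₀ (abs_nonneg _) hbound_nonneg hdiff
  rw [frob_smul, sq, ← mul_assoc]
  exact mul_le_mul_of_nonneg_right hquot (frob_nonneg U)

end Frobenius

section GOE

variable {n : ℕ}

def goeVar (p : Fin n × Fin n) : ℝ≥0 := if p.1 = p.2 then 1 else 2⁻¹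

theorem goeVar_ne_zero (p : Fin n × Fin n) : goeVar p ≠ 0 := by
  unfold goeVar
  split_ifs <;> norm_num

def upperSymm (g : Fin n → Fin n → ℝ) : Matrix (Fin n) (Fin n) ℝ :=
  Matrix.of fun i j => if i ≤ j then g i j else g j i

def upperPairs (n : ℕ) : Finset (Fin n × Fin n) := {p | p.1 ≤ p.2}

def normalizedEntrySq (p : Fin n × Fin n) (g : Fin n → Fin n → ℝ) : ℝ :=
  (goeVar p : ℝ)⁻¹ * g p.1 p.2 ^ 2

theorem two_mul_card_upperPairs (n : ℕ) : 2 * #(upperPairs n) = n * (n + 1) := by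
  have hcard : #(upperPairs n) = ∑ j : Fin n, (j + 1 : ℕ) := by
    rw [upperPairs, card_filter, Fintype.sum_prod_type_right]
    refine sum_congr rfl fun j _ => ?_
    rw [← Fin.card_Iic, ← card_filter]
    congr 1
    ext i
    simp
  have hgauss (m : ℕ) : 2 * ∑ j ∈ range m, (j + 1) = m * (m + 1) := by
    induction m with
    | zero => rfl
    | succ m ih => rw [sum_range_succ, mul_add, ih]; ring
  rw [hcard, Fin.sum_univ_eq_sum_range (fun j => j + 1), hgauss]

instance isProbabilityMeasure_gaussAux (n : ℕ) : IsProbabilityMeasure (gaussAux n) := by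
  rw [gaussAux]
  infer_instance

theorem goe_eq_map (n : ℕ) : goe n = (gaussAux n).map upperSymm := rfl

theorem upperSymm_isSymm (g : Fin n → Fin n → ℝ) : (upperSymm g).IsSymm := by
  refine Matrix.IsSymm.ext fun i j => ?_
  simp only [upperSymm, Matrix.of_apply]
  rcases lt_trichotomy i j with h | rfl | h
  · simp [h.le, not_le.2 h]
  · rfl
  · simp [h.le, not_le.2 h]

theorem measurable_upperSymm : Measurable (upperSymm : (Fin n → Fin n → ℝ) → _) := by
  refine measurable_pi_lambda _ fun i => measurable_pi_lambda _ fun j => ?_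
  by_cases h : i ≤ j <;> simp only [upperSymm, Matrix.of_apply, h, if_true, if_false] <;> fun_prop

theorem ae_isSymm_goe (n : ℕ) : ∀ᵐ U ∂goe n, U.IsSymm := by
  have hmeas : MeasurableSet {U : Matrix (Fin n) (Fin n) ℝ | U.IsSymm} := by
    simp only [Matrix.IsSymm.ext_iff, Set.ofPred_forall]
    exact .iInter fun i => .iInter fun j => measurableSet_eq_fun (by fun_prop) (by fun_prop)
  rw [goe_eq_map, ae_map_iff measurable_upperSymm.aemeasurable hmeas]
  exact ae_of_all _ upperSymm_isSymm

theorem frob_upperSymm_sq (g : Fin n → Fin n → ℝ) :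
    frob (upperSymm g) ^ 2 = ∑ p ∈ upperPairs n, normalizedEntrySq p g := by
  have hentry (i j : Fin n) : upperSymm g i j ^ 2
      = (if i ≤ j then g i j ^ 2 else 0) + (if j < i then g j i ^ 2 else 0) := by
    rcases le_or_gt i j with h | h
    · simp [upperSymm, h, not_lt.2 h]
    · simp [upperSymm, h, not_le.2 h]
  have hweight (i j : Fin n) :
      ((if i ≤ j then g i j ^ 2 else 0) + if i < j then g i j ^ 2 else 0)
        = if i ≤ j then normalizedEntrySq (i, j) g else 0 := by
    rcases lt_trichotomy i j with h | rfl | h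
    · simp [normalizedEntrySq, goeVar, h.le, h, h.ne]
      ring
    · simp [normalizedEntrySq, goeVar]
    · simp [not_le.2 h, not_lt.2 h.le]
  simp only [frob_sq, hentry, sum_add_distrib]
  rw [sum_comm (f := fun i j => if j < i then g j i ^ 2 else 0)]
  simp only [← sum_add_distrib, hweight]
  rw [upperPairs, sum_filter, Fintype.sum_prod_type]

theorem frob_upperSymm_pow_four (g : Fin n → Fin n → ℝ) :
    frob (upperSymm g) ^ 4 = (∑ p ∈ upperPairs n, normalizedEntrySq p g) ^ 2 := by
  rw [show 4 = 2 * 2 from rfl, pow_mul, frob_upperSymm_sq]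

theorem measurePreserving_entry_gaussAux (p : Fin n × Fin n) :
    MeasurePreserving (fun g : Fin n → Fin n → ℝ => g p.1 p.2) (gaussAux n)
      (gaussianReal 0 (goeVar p)) :=
  measurePreserving_eval_eval_pi _ p.1 p.2

theorem memLp_normalizedEntrySq (p : Fin n × Fin n) :
    MemLp (normalizedEntrySq p) 2 (gaussAux n) :=
  (memLp_inv_mul_sq_gaussianReal _).comp_measurePreserving (measurePreserving_entry_gaussAux p)

theorem integral_normalizedEntrySq (p : Fin n × Fin n) :
    ∫ g, normalizedEntrySq p g ∂gaussAux n = 1 := by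
  have hmp := measurePreserving_entry_gaussAux p
  have := integral_map hmp.aemeasurable (f := fun x => (goeVar p : ℝ)⁻¹ * x ^ 2) (by fun_prop)
  rw [hmp.map_eq, integral_inv_mul_sq_gaussianReal (goeVar_ne_zero p)] at this
  exact this.symm

theorem variance_normalizedEntrySq (p : Fin n × Fin n) :
    variance (normalizedEntrySq p) (gaussAux n) = 2 := by
  rw [← variance_inv_mul_sq_gaussianReal (goeVar_ne_zero p)]
  exact (measurePreserving_entry_gaussAux p).variance_fun_comp
    (f := fun x => (goeVar p : ℝ)⁻¹ * x ^ 2) (by fun_prop)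

theorem indepFun_normalizedEntrySq {p q : Fin n × Fin n} (hpq : p ≠ q) :
    IndepFun (normalizedEntrySq p) (normalizedEntrySq q) (gaussAux n) :=
  ((iIndepFun_eval_eval_pi _).indepFun hpq).comp
    (φ := fun x => (goeVar p : ℝ)⁻¹ * x ^ 2) (ψ := fun x => (goeVar q : ℝ)⁻¹ * x ^ 2)
    (by fun_prop) (by fun_prop)

theorem integrable_frob_pow_four_goe (n : ℕ) : Integrable (fun U => frob U ^ 4) (goe n) := by
  rw [goe_eq_map, integrable_map_measure (measurable_frob.pow_const 4).aestronglyMeasurable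
    measurable_upperSymm.aemeasurable]
  simpa only [Function.comp_def, frob_upperSymm_pow_four] using
    (memLp_finsetSum (upperPairs n) fun p _ => memLp_normalizedEntrySq p).integrable_sq

theorem integral_frob_pow_four_goe (n : ℕ) :
    ∫ U, frob U ^ 4 ∂goe n = ((n : ℝ) ^ 4 + 2 * n ^ 3 + 5 * n ^ 2 + 4 * n) / 4 := by
  have hcard : (#(upperPairs n) : ℝ) = n * (n + 1) / 2 := by
    rw [eq_div_iff two_ne_zero, mul_comm]
    exact_mod_cast two_mul_card_upperPairs n
  rw [goe_eq_map, integral_map measurable_upperSymm.aemeasurable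
    (measurable_frob.pow_const 4).aestronglyMeasurable]
  simp only [frob_upperSymm_pow_four]
  rw [integral_sq_sum_eq_of_indepFun (fun p _ => memLp_normalizedEntrySq p)
    fun p _ q _ hpq => indepFun_normalizedEntrySq hpq]
  simp only [integral_normalizedEntrySq, variance_normalizedEntrySq, sum_const, nsmul_eq_mul,
    mul_one, hcard]
  ring

end GOE

theorem oracle_second_moment_general (n : ℕ) (f : Matrix (Fin n) (Fin n) ℝ → ℝ) (L₀ : ℝ)
    (hlip : ∀ X Y : Matrix (Fin n) (Fin n) ℝ, X.IsSymm → Y.IsSymm →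
      |f X - f Y| ≤ L₀ * frob (X - Y))
    (μ : ℝ)
    (X : Matrix (Fin n) (Fin n) ℝ) (hX : X.IsSymm) :
    ∫ U, frob (((f (X + μ • U) - f X) / μ) • U) ^ 2 ∂(goe n)
      ≤ (1 / 4) * L₀ ^ 2 * ((n : ℝ) ^ 4 + 2 * (n : ℝ) ^ 3 + 5 * (n : ℝ) ^ 2 + 4 * (n : ℝ)) := by
  have hbound : ∀ᵐ U ∂goe n,
      frob (((f (X + μ • U) - f X) / μ) • U) ^ 2 ≤ L₀ ^ 2 * frob U ^ 4 := by
    filter_upwards [ae_isSymm_goe n] with U hU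
    have := pow_le_pow_left₀ (frob_nonneg _) (frob_oracle_le hlip μ hX hU) 2
    rwa [mul_pow, ← pow_mul] at this
  calc ∫ U, frob (((f (X + μ • U) - f X) / μ) • U) ^ 2 ∂goe n
      ≤ ∫ U, L₀ ^ 2 * frob U ^ 4 ∂goe n :=
        integral_mono_of_nonneg (ae_of_all _ fun _ => sq_nonneg _)
          ((integrable_frob_pow_four_goe n).const_mul _) hbound
    _ = _ := by rw [integral_const_mul, integral_frob_pow_four_goe]; ring

/-- If `f : 𝕊ⁿ → ℝ` is `L₀`-Lipschitz w.r.t. the Frobenius norm and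
`μ > 0`, then the zeroth-order oracle `O_μ(X,U) = ((f(X + μU) − f(X))/μ) • U` satisfies
`E_{U∼𝔾ⁿ}[‖O_μ(X,U)‖_F²] ≤ (1/4) L₀² (n⁴ + 2n³ + 5n² + 4n)` for every symmetric `X`. -/
theorem oracle_second_moment (n : ℕ) (f : Matrix (Fin n) (Fin n) ℝ → ℝ) (L₀ : ℝ)
    (hlip : ∀ X Y : Matrix (Fin n) (Fin n) ℝ, X.IsSymm → Y.IsSymm →
      |f X - f Y| ≤ L₀ * frob (X - Y))
    (μ : ℝ) (hμ : 0 < μ)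
    (X : Matrix (Fin n) (Fin n) ℝ) (hX : X.IsSymm) :
    ∫ U, frob (((f (X + μ • U) - f X) / μ) • U) ^ 2 ∂(goe n)
      ≤ (1 / 4) * L₀ ^ 2 * ((n : ℝ) ^ 4 + 2 * (n : ℝ) ^ 3 + 5 * (n : ℝ) ^ 2 + 4 * (n : ℝ)) :=
  oracle_second_moment_general n f L₀ hlip μ X hX
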